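/- arXiv:1612.00767 — 3 statements merged into one kernel-verified Lean document; each statement's English description precedes it below -/
import Mathlib

section
/- The Gaussian density p(θ, p) ∝ exp(−U(θ) − pᵀM⁻¹p) with U(θ) = ½θᵀΣ⁻¹θ is a stationary density of the continuous-time SGHMC dynamics dθ = M⁻¹p dt, dp = (−∇U(θ) − V M⁻¹p) dt + √(2V) dW, i.e., it satisfies the corresponding stationary Fokker–Planck equation ∇·(f ρ) = ∇·(D ∇ρ) with f(θ,p) = (M⁻¹p, −∇U(θ) − V M⁻¹p) and D = diag(0, V). -/
open Matrix Real

/-- The Gaussian density `ρ(θ,p) = exp(−½θᵀΣ⁻¹θ − ½pᵀM⁻¹p)` satisfies the stationary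
Fokker–Planck equation `∑ᵢ ∂ᵢ(fᵢρ) = ∑ᵢⱼ ∂ᵢ∂ⱼ(Dᵢⱼρ)` for the SGHMC drift
`f(θ,p) = (M⁻¹p, −Σ⁻¹θ − VM⁻¹p)` and diffusion `D = diag(0, V)`. -/
theorem sghmc_gaussian_stationary (n : ℕ)
    (S M V : Matrix (Fin n) (Fin n) ℝ)
    (hS : S.PosDef) (hM : M.PosDef) (hV : V.PosSemidef)
    (ρ : ((Fin n ⊕ Fin n) → ℝ) → ℝ)
    (hρ : ∀ w, ρ w = Real.exp (-(1 / 2 * ((w ∘ Sum.inl) ⬝ᵥ S⁻¹ *ᵥ (w ∘ Sum.inl)))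
      - 1 / 2 * ((w ∘ Sum.inr) ⬝ᵥ M⁻¹ *ᵥ (w ∘ Sum.inr))))
    (f : (Fin n ⊕ Fin n) → ((Fin n ⊕ Fin n) → ℝ) → ℝ)
    (hf₁ : ∀ i w, f (Sum.inl i) w = (M⁻¹ *ᵥ (w ∘ Sum.inr)) i)
    (hf₂ : ∀ i w, f (Sum.inr i) w =
      -((S⁻¹ *ᵥ (w ∘ Sum.inl)) i) - (V *ᵥ M⁻¹ *ᵥ (w ∘ Sum.inr)) i)
    (D : Matrix (Fin n ⊕ Fin n) (Fin n ⊕ Fin n) ℝ)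
    (hD : D = Matrix.fromBlocks 0 0 0 V) :
    ∀ z : (Fin n ⊕ Fin n) → ℝ,
      (∑ i, fderiv ℝ (fun w => f i w * ρ w) z (Pi.single i 1)) =
      ∑ i, ∑ j, fderiv ℝ (fun w =>
        fderiv ℝ (fun u => D i j * ρ u) w (Pi.single j 1)) z (Pi.single i 1) := by
  intro z
  set A : Matrix (Fin n ⊕ Fin n) (Fin n ⊕ Fin n) ℝ := Matrix.fromBlocks S⁻¹ 0 0 M⁻¹ with hA
  -- symmetry of entries
  have hSsymm : ∀ i j, S⁻¹ i j = S⁻¹ j i := by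
    intro i j
    have := hS.inv.isHermitian.apply i j
    simp at this
    exact this.symm
  have hMsymm : ∀ i j, M⁻¹ i j = M⁻¹ j i := by
    intro i j
    have := hM.inv.isHermitian.apply i j
    simp at this
    exact this.symm
  have hAs : ∀ i j, A i j = A j i := by
    intro i j
    cases i <;> cases j <;> simp [hA, Matrix.fromBlocks] <;> first | exact hSsymm _ _ | exact hMsymm _ _
  -- quadratic form expansion
  have hQ_expand : ∀ w : (Fin n ⊕ Fin n) → ℝ, w ⬝ᵥ A *ᵥ w = ∑ i, ∑ j, A i j * (w i * w j) := by
    intro w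
    simp only [dotProduct, Matrix.mulVec, Finset.mul_sum]
    exact Finset.sum_congr rfl fun i _ => Finset.sum_congr rfl fun j _ => by ring
  -- block identity
  have hblock : ∀ w : (Fin n ⊕ Fin n) → ℝ,
      w ⬝ᵥ A *ᵥ w = (w ∘ Sum.inl) ⬝ᵥ S⁻¹ *ᵥ (w ∘ Sum.inl) + (w ∘ Sum.inr) ⬝ᵥ M⁻¹ *ᵥ (w ∘ Sum.inr) := by
    intro w
    rw [hA, Matrix.fromBlocks_mulVec]
    simp [dotProduct, Fintype.sum_sum_type]
  have hρA : ∀ w, ρ w = Real.exp (-(1/2) * (w ⬝ᵥ A *ᵥ w)) := by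
    intro w
    rw [hρ, hblock]
    congr 1
    ring
  -- projections
  set P : (Fin n ⊕ Fin n) → ((Fin n ⊕ Fin n) → ℝ) →L[ℝ] ℝ := fun k => ContinuousLinearMap.proj k with hP
  have hPval : ∀ k k' : Fin n ⊕ Fin n, P k (Pi.single k' (1:ℝ)) = if k = k' then 1 else 0 := by
    intro k k'; simp [hP, Pi.single_apply]
  -- derivative of quadratic form
  set LQ : ((Fin n ⊕ Fin n) → ℝ) → ((Fin n ⊕ Fin n) → ℝ) →L[ℝ] ℝ :=
    fun w => ∑ i, ∑ j, A i j • (w i • P j + w j • P i) with hLQdef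
  have hQder : ∀ w, HasFDerivAt (fun w : (Fin n ⊕ Fin n) → ℝ => w ⬝ᵥ A *ᵥ w) (LQ w) w := by
    intro w
    rw [funext hQ_expand]
    exact HasFDerivAt.fun_sum fun i _ => HasFDerivAt.fun_sum fun j _ =>
      (((P i).hasFDerivAt).mul ((P j).hasFDerivAt)).const_mul _
  have hLQ : ∀ w k, LQ w (Pi.single k 1) = 2 * (A *ᵥ w) k := by
    intro w k
    simp only [hLQdef, ContinuousLinearMap.sum_apply, ContinuousLinearMap.smul_apply,
      ContinuousLinearMap.add_apply, hPval, smul_eq_mul, mul_ite, mul_one, mul_zero, mul_add]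
    simp only [Finset.sum_add_distrib, Finset.sum_ite_eq', Finset.mem_univ, if_true]
    have hswap : ∀ x : Fin n ⊕ Fin n, (∑ x_1, if x = k then A x x_1 * w x_1 else 0)
        = if x = k then ∑ x_1, A x x_1 * w x_1 else 0 := fun x => by split <;> simp
    rw [Finset.sum_congr rfl fun x _ => hswap x, Finset.sum_ite_eq' Finset.univ k
      (fun x => ∑ x_1, A x x_1 * w x_1)]
    simp only [Finset.mem_univ, if_true, Matrix.mulVec, dotProduct, two_mul]
    congr 1
    exact Finset.sum_congr rfl fun x _ => by rw [hAs]
  -- derivative of ρ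
  set Lρ : ((Fin n ⊕ Fin n) → ℝ) → ((Fin n ⊕ Fin n) → ℝ) →L[ℝ] ℝ :=
    fun w => Real.exp (-(1/2) * (w ⬝ᵥ A *ᵥ w)) • ((-(1/2) : ℝ) • LQ w) with hLρdef
  have hρd : ∀ w, HasFDerivAt ρ (Lρ w) w := by
    intro w
    rw [funext hρA]
    exact ((hQder w).const_mul (-(1/2) : ℝ)).exp
  have hLρ : ∀ w k, Lρ w (Pi.single k 1) = -(ρ w * (A *ᵥ w) k) := by
    intro w k
    simp only [hLρdef, ContinuousLinearMap.smul_apply, hLQ, smul_eq_mul, hρA w]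
    ring
  -- derivatives of the drift
  set Lf1 : Fin n → ((Fin n ⊕ Fin n) → ℝ) →L[ℝ] ℝ :=
    fun i => ∑ j, (M⁻¹ i j) • P (Sum.inr j) with hLf1def
  have hf1d : ∀ (i : Fin n) w, HasFDerivAt (f (Sum.inl i)) (Lf1 i) w := by
    intro i w
    have he : f (Sum.inl i) = fun w : (Fin n ⊕ Fin n) → ℝ => ∑ j, M⁻¹ i j * w (Sum.inr j) := by
      funext w
      rw [hf₁]
      simp [Matrix.mulVec, dotProduct]
    rw [he]
    exact HasFDerivAt.fun_sum fun j _ => ((P (Sum.inr j)).hasFDerivAt).const_mul _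
  set Lf2 : Fin n → ((Fin n ⊕ Fin n) → ℝ) →L[ℝ] ℝ :=
    fun i => (∑ j, (-(S⁻¹ i j)) • P (Sum.inl j)) + ∑ j, (-((V * M⁻¹) i j)) • P (Sum.inr j) with hLf2def
  have hf2d : ∀ (i : Fin n) w, HasFDerivAt (f (Sum.inr i)) (Lf2 i) w := by
    intro i w
    have he : f (Sum.inr i) = fun w : (Fin n ⊕ Fin n) → ℝ =>
        (∑ j, (-(S⁻¹ i j)) * w (Sum.inl j)) + ∑ j, (-((V * M⁻¹) i j)) * w (Sum.inr j) := by
      funext w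
      rw [hf₂, Matrix.mulVec_mulVec]
      simp [Matrix.mulVec, dotProduct, neg_mul, Finset.sum_neg_distrib, sub_eq_add_neg]
    rw [he]
    exact HasFDerivAt.add
      (HasFDerivAt.fun_sum fun j _ => ((P (Sum.inl j)).hasFDerivAt).const_mul _)
      (HasFDerivAt.fun_sum fun j _ => ((P (Sum.inr j)).hasFDerivAt).const_mul _)
  have hLf1 : ∀ i : Fin n, Lf1 i (Pi.single (Sum.inl i) (1:ℝ)) = 0 := by
    intro i
    simp [hLf1def, ContinuousLinearMap.sum_apply, hPval]
  have hLf2 : ∀ i : Fin n, Lf2 i (Pi.single (Sum.inr i) (1:ℝ)) = -((V * M⁻¹) i i) := by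
    intro i
    simp [hLf2def, ContinuousLinearMap.sum_apply, ContinuousLinearMap.add_apply, hPval]
  -- derivative of the linear map w ↦ (A *ᵥ w) j
  set LA : (Fin n ⊕ Fin n) → ((Fin n ⊕ Fin n) → ℝ) →L[ℝ] ℝ :=
    fun j => ∑ k, A j k • P k with hLAdef
  have hLAd : ∀ (j : Fin n ⊕ Fin n) w, HasFDerivAt (fun w : (Fin n ⊕ Fin n) → ℝ => (A *ᵥ w) j) (LA j) w := by
    intro j w
    have he : (fun w : (Fin n ⊕ Fin n) → ℝ => (A *ᵥ w) j) = fun w => ∑ k, A j k * w k := by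
      funext w
      simp [Matrix.mulVec, dotProduct]
    rw [he]
    exact HasFDerivAt.fun_sum fun k _ => ((P k).hasFDerivAt).const_mul _
  have hLA : ∀ j i, LA j (Pi.single i (1:ℝ)) = A j i := by
    intro j i
    simp only [hLAdef, ContinuousLinearMap.sum_apply, ContinuousLinearMap.smul_apply, hPval,
      smul_eq_mul, mul_ite, mul_one, mul_zero, Finset.sum_ite_eq', Finset.mem_univ, if_true]
  -- evaluations of A *ᵥ z
  have hAzl : ∀ i, (A *ᵥ z) (Sum.inl i) = (S⁻¹ *ᵥ (z ∘ Sum.inl)) i := by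
    intro i
    rw [hA, Matrix.fromBlocks_mulVec]
    simp
  have hAzr : ∀ i, (A *ᵥ z) (Sum.inr i) = (M⁻¹ *ᵥ (z ∘ Sum.inr)) i := by
    intro i
    rw [hA, Matrix.fromBlocks_mulVec]
    simp
  -- LHS terms
  have hL1 : ∀ i : Fin n, fderiv ℝ (fun w => f (Sum.inl i) w * ρ w) z (Pi.single (Sum.inl i) 1)
      = -(ρ z * ((M⁻¹ *ᵥ (z ∘ Sum.inr)) i * (S⁻¹ *ᵥ (z ∘ Sum.inl)) i)) := by
    intro i
    rw [((hf1d i z).fun_mul (hρd z)).fderiv]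
    simp only [ContinuousLinearMap.add_apply, ContinuousLinearMap.smul_apply, smul_eq_mul,
      hLρ, hLf1, hf₁, hAzl]
    ring
  have hL2 : ∀ i : Fin n, fderiv ℝ (fun w => f (Sum.inr i) w * ρ w) z (Pi.single (Sum.inr i) 1)
      = (-((S⁻¹ *ᵥ (z ∘ Sum.inl)) i) - ((V * M⁻¹) *ᵥ (z ∘ Sum.inr)) i) * (-(ρ z * (M⁻¹ *ᵥ (z ∘ Sum.inr)) i))
        + ρ z * (-((V * M⁻¹) i i)) := by
    intro i
    rw [((hf2d i z).fun_mul (hρd z)).fderiv]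
    simp only [ContinuousLinearMap.add_apply, ContinuousLinearMap.smul_apply, smul_eq_mul,
      hLρ, hLf2, hf₂, hAzr, Matrix.mulVec_mulVec]
  -- RHS terms
  have hinner : ∀ i j : Fin n ⊕ Fin n, (fun w => fderiv ℝ (fun u => D i j * ρ u) w (Pi.single j 1))
      = fun w => -(D i j) * (ρ w * (A *ᵥ w) j) := by
    intro i j
    funext w
    rw [((hρd w).const_mul (D i j)).fderiv]
    simp only [ContinuousLinearMap.smul_apply, smul_eq_mul, hLρ]
    ring
  have hR : ∀ i j : Fin n ⊕ Fin n,
      fderiv ℝ (fun w => fderiv ℝ (fun u => D i j * ρ u) w (Pi.single j 1)) z (Pi.single i 1)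
      = -(D i j) * (ρ z * A j i + (A *ᵥ z) j * (-(ρ z * (A *ᵥ z) i))) := by
    intro i j
    rw [hinner i j, (((hρd z).fun_mul (hLAd j z)).const_mul (-(D i j))).fderiv]
    simp only [ContinuousLinearMap.smul_apply, ContinuousLinearMap.add_apply, smul_eq_mul, hLA, hLρ]
  -- assemble
  simp only [hR]
  rw [Fintype.sum_sum_type]
  simp only [hL1, hL2]
  have hArr : ∀ a b : Fin n, A (Sum.inr a) (Sum.inr b) = M⁻¹ a b := by
    intro a b; simp [hA]
  rw [hD]
  rw [Fintype.sum_sum_type]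
  simp only [Fintype.sum_sum_type, Matrix.fromBlocks_apply₁₁, Matrix.fromBlocks_apply₁₂,
    Matrix.fromBlocks_apply₂₁, Matrix.fromBlocks_apply₂₂, Matrix.zero_apply, neg_zero, zero_mul,
    Finset.sum_const_zero, add_zero, zero_add, hAzr, hArr]
  rw [← Finset.sum_add_distrib]
  apply Finset.sum_congr rfl
  intro a _
  have hVq : ((V * M⁻¹) *ᵥ z ∘ Sum.inr) a = ∑ b, V a b * (M⁻¹ *ᵥ z ∘ Sum.inr) b := by
    rw [← Matrix.mulVec_mulVec]
    simp [Matrix.mulVec, dotProduct]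
  have hVM : (V * M⁻¹) a a = ∑ b, V a b * M⁻¹ b a := Matrix.mul_apply
  rw [hVq, hVM]
  have hterm : ∀ b : Fin n, -V a b * (ρ z * M⁻¹ b a
        + (M⁻¹ *ᵥ z ∘ Sum.inr) b * -(ρ z * (M⁻¹ *ᵥ z ∘ Sum.inr) a))
      = (V a b * (M⁻¹ *ᵥ z ∘ Sum.inr) b) * (ρ z * (M⁻¹ *ᵥ z ∘ Sum.inr) a)
        - ρ z * (V a b * M⁻¹ b a) := fun b => by ring
  rw [Finset.sum_congr rfl fun b _ => hterm b, Finset.sum_sub_distrib, ← Finset.sum_mul,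
    ← Finset.mul_sum]
  ring
end

section
/- For f(z) = −(D + Q)∇H(z) with D symmetric positive semidefinite and Q skew-symmetric, both constant, the density ρ(z) = exp(−H(z)) satisfies the stationary Fokker–Planck equation Σᵢ ∂ᵢ(fᵢ ρ) = Σᵢⱼ Dᵢⱼ ∂ᵢ∂ⱼ ρ, provided H is twice continuously differentiable. -/
open Matrix Real

/-- For `f(z) = −(D+Q)∇H(z)` with `D` symmetric PSD and `Q` skew-symmetric (both constant)
and `H` of class `C²`, the density `ρ = exp(−H)` satisfies the stationary Fokker–Planck
equation `∑ᵢ ∂ᵢ(fᵢρ) = ∑ᵢⱼ Dᵢⱼ ∂ᵢ∂ⱼρ`. -/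
theorem sgmcmc_stationary (m : ℕ) (H : (Fin m → ℝ) → ℝ) (hH : ContDiff ℝ 2 H)
    (D Q : Matrix (Fin m) (Fin m) ℝ) (hD : D.PosSemidef) (hQ : Qᵀ = -Q)
    (gH : (Fin m → ℝ) → (Fin m → ℝ))
    (hgH : ∀ z i, gH z i = fderiv ℝ H z (Pi.single i 1))
    (f : Fin m → (Fin m → ℝ) → ℝ)
    (hf : ∀ i z, f i z = -(((D + Q) *ᵥ gH z) i))
    (ρ : (Fin m → ℝ) → ℝ) (hρ : ∀ z, ρ z = Real.exp (-(H z))) :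
    ∀ z : Fin m → ℝ,
      (∑ i, fderiv ℝ (fun w => f i w * ρ w) z (Pi.single i 1)) =
      ∑ i, ∑ j, D i j *
        fderiv ℝ (fun w => fderiv ℝ ρ w (Pi.single j 1)) z (Pi.single i 1) := by
  have hρfun : ρ = fun w => Real.exp (-(H w)) := funext hρ
  subst hρfun
  intro z
  have hHd : Differentiable ℝ H := hH.differentiable two_ne_zero
  have hH1 : ContDiff ℝ 1 (fderiv ℝ H) := hH.fderiv_right (by norm_num)
  have hB : ∀ w, HasFDerivAt (fderiv ℝ H) (fderiv ℝ (fderiv ℝ H) w) w :=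
    fun w => ((hH1.differentiable one_ne_zero) w).hasFDerivAt
  have hρd : ∀ w, HasFDerivAt (fun x => Real.exp (-(H x)))
      (Real.exp (-(H w)) • (-(fderiv ℝ H w))) w :=
    fun w => ((hHd w).hasFDerivAt.neg).exp
  have hgd : ∀ (w : Fin m → ℝ) (u : Fin m → ℝ), HasFDerivAt (fun x => fderiv ℝ H x u)
      ((ContinuousLinearMap.apply ℝ ℝ u).comp (fderiv ℝ (fderiv ℝ H) w)) w :=
    fun w u => (ContinuousLinearMap.apply ℝ ℝ u).hasFDerivAt.comp w (hB w)
  set e : ℝ := Real.exp (-(H z)) with he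
  set g : Fin m → ℝ := fun i => fderiv ℝ H z (Pi.single i 1) with hg
  set B : Fin m → Fin m → ℝ :=
    fun i j => fderiv ℝ (fderiv ℝ H) z (Pi.single i 1) (Pi.single j 1) with hBdef
  have hBsymm : ∀ i j, B i j = B j i := fun i j =>
    second_derivative_symmetric (fun y => (hHd y).hasFDerivAt) (hB z) _ _
  set c : Matrix (Fin m) (Fin m) ℝ := D + Q with hc
  -- LHS summand
  have key1 : ∀ i, fderiv ℝ (fun w => f i w * Real.exp (-(H w))) z (Pi.single i 1)
      = (-(∑ j, c i j * B i j)) * e + (-(∑ j, c i j * g j)) * (e * -(g i)) := by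
    intro i
    have heq : (fun w => f i w * Real.exp (-(H w)))
        = fun w => (-(∑ j, c i j * fderiv ℝ H w (Pi.single j 1))) * Real.exp (-(H w)) := by
      funext w
      rw [hf]
      simp [Matrix.mulVec, dotProduct, hgH, hc]
    rw [heq]
    have hsum : HasFDerivAt (fun w => ∑ j, c i j * fderiv ℝ H w (Pi.single j 1))
        (∑ j, c i j • ((ContinuousLinearMap.apply ℝ ℝ (Pi.single j 1)).comp
          (fderiv ℝ (fderiv ℝ H) z))) z :=
      HasFDerivAt.fun_sum (fun j _ => (hgd z (Pi.single j 1)).const_mul (c i j))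
    have hprod := (hsum.fun_neg).fun_mul (hρd z)
    rw [hprod.fderiv]
    simp [hBdef, hg, he, Finset.sum_apply]
    ring
  -- RHS second derivative
  have key2 : ∀ i j, fderiv ℝ (fun w => fderiv ℝ (fun x => Real.exp (-(H x))) w (Pi.single j 1))
      z (Pi.single i 1) = -((e * -(g i)) * g j + e * B i j) := by
    intro i j
    have heq : (fun w => fderiv ℝ (fun x => Real.exp (-(H x))) w (Pi.single j 1))
        = fun w => -(Real.exp (-(H w)) * fderiv ℝ H w (Pi.single j 1)) := by
      funext w
      rw [(hρd w).fderiv]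
      simp
    rw [heq]
    have hprod := ((hρd z).fun_mul (hgd z (Pi.single j 1))).fun_neg
    rw [hprod.fderiv]
    simp [hBdef, hg, he]
    ring
  simp only [key1, key2]
  -- algebra
  have lhs_i : ∀ i, (-(∑ j, c i j * B i j)) * e + (-(∑ j, c i j * g j)) * (e * -(g i))
      = ∑ j, e * (c i j * (g i * g j - B i j)) := by
    intro i
    rw [neg_mul, neg_mul, Finset.sum_mul, Finset.sum_mul, ← Finset.sum_neg_distrib,
      ← Finset.sum_neg_distrib, ← Finset.sum_add_distrib]
    exact Finset.sum_congr rfl (fun j _ => by ring)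
  have rhs_i : ∀ (i : Fin m), ∑ j, D i j * -((e * -(g i)) * g j + e * B i j)
      = ∑ j, e * (D i j * (g i * g j - B i j)) :=
    fun i => Finset.sum_congr rfl (fun j _ => by ring)
  simp only [lhs_i]
  rw [Finset.sum_congr rfl (fun i _ => rhs_i i)]
  -- use skewness of Q and symmetry of S
  have hQ' : ∀ i j, Q j i = -Q i j := by
    intro i j
    have := congrFun (congrFun hQ i) j
    simpa [Matrix.transpose_apply] using this
  have hQ0 : ∑ i, ∑ j, e * (Q i j * (g i * g j - B i j)) = 0 := by
    have h1 : ∑ i, ∑ j, e * (Q i j * (g i * g j - B i j))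
        = ∑ j, ∑ i, e * (Q i j * (g i * g j - B i j)) := Finset.sum_comm
    have h2 : ∑ j, ∑ i, e * (Q i j * (g i * g j - B i j))
        = ∑ i, ∑ j, e * (Q j i * (g j * g i - B j i)) := rfl
    have h3 : ∑ i, ∑ j, e * (Q j i * (g j * g i - B j i))
        = -∑ i, ∑ j, e * (Q i j * (g i * g j - B i j)) := by
      rw [← Finset.sum_neg_distrib]
      refine Finset.sum_congr rfl (fun i _ => ?_)
      rw [← Finset.sum_neg_distrib]
      refine Finset.sum_congr rfl (fun j _ => ?_)
      rw [hQ' i j, hBsymm j i]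
      ring
    have := h1.trans (h2.trans h3)
    linarith
  calc ∑ i, ∑ j, e * (c i j * (g i * g j - B i j))
      = ∑ i, ∑ j, (e * (D i j * (g i * g j - B i j)) + e * (Q i j * (g i * g j - B i j))) := by
        refine Finset.sum_congr rfl (fun i _ => Finset.sum_congr rfl (fun j _ => ?_))
        simp [hc, Matrix.add_apply]; ring
    _ = ∑ i, ∑ j, e * (D i j * (g i * g j - B i j)) := by
        rw [Finset.sum_congr rfl (fun i _ => Finset.sum_add_distrib), Finset.sum_add_distrib, hQ0,
          add_zero]
end

section
/- If exp(−U) is integrable on ℝⁿ, then exp(−H) is integrable on (ℝⁿ)^{2K+2} for the elastically coupled Hamiltonian H(θ¹,…,θᴷ,p¹,…,pᴷ,c,r) = Σᵢ(U(θⁱ) + (pⁱ)ᵀM⁻¹pⁱ) + (α/(2K))Σᵢ‖θⁱ−c‖² + rᵀM⁻¹r, for any α > 0 and symmetric positive definite M. -/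
open MeasureTheory Matrix Real

set_option synthInstance.maxSize 1024

private def qf {n : ℕ} (A : Matrix (Fin n) (Fin n) ℝ) (x : EuclideanSpace ℝ (Fin n)) : ℝ :=
  (x : Fin n → ℝ) ⬝ᵥ A *ᵥ (x : Fin n → ℝ)

private lemma qf_continuous {n : ℕ} (A : Matrix (Fin n) (Fin n) ℝ) : Continuous (qf A) := by
  have h : ∀ j : Fin n, Continuous fun x : EuclideanSpace ℝ (Fin n) => (x : Fin n → ℝ) j :=
    fun j => (EuclideanSpace.proj (𝕜 := ℝ) j).continuous
  unfold qf
  simp only [dotProduct, Matrix.mulVec]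
  exact continuous_finset_sum _ fun j _ =>
    (h j).mul (continuous_finset_sum _ fun k _ => continuous_const.mul (h k))

private lemma qf_smul {n : ℕ} (A : Matrix (Fin n) (Fin n) ℝ) (c : ℝ)
    (x : EuclideanSpace ℝ (Fin n)) : qf A (c • x) = c ^ 2 * qf A x := by
  show (c • (x : Fin n → ℝ)) ⬝ᵥ A *ᵥ (c • (x : Fin n → ℝ)) = c ^ 2 * qf A x
  rw [Matrix.mulVec_smul, smul_dotProduct, dotProduct_smul, smul_eq_mul,
    smul_eq_mul]
  unfold qf; ring

private lemma qf_zero {n : ℕ} (A : Matrix (Fin n) (Fin n) ℝ) :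
    qf A (0 : EuclideanSpace ℝ (Fin n)) = 0 := by
  show (0 : Fin n → ℝ) ⬝ᵥ A *ᵥ (0 : Fin n → ℝ) = 0
  simp

private lemma qf_pos {n : ℕ} {A : Matrix (Fin n) (Fin n) ℝ} (hA : A.PosDef)
    {x : EuclideanSpace ℝ (Fin n)} (hx : x ≠ 0) : 0 < qf A x := by
  have h := hA.dotProduct_mulVec_pos (x := x.ofLp) (by intro h0; apply hx; ext i; simpa using congrFun h0 i)
  simpa [qf, star_trivial] using h

private lemma qf_lower {n : ℕ} (A : Matrix (Fin n) (Fin n) ℝ) (hA : A.PosDef) :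
    ∃ ε : ℝ, 0 < ε ∧ ∀ x : EuclideanSpace ℝ (Fin n), ε * ‖x‖ ^ 2 ≤ qf A x := by
  rcases (Metric.sphere (0 : EuclideanSpace ℝ (Fin n)) 1).eq_empty_or_nonempty with hs | hs
  · refine ⟨1, one_pos, fun x => ?_⟩
    have hx : x = 0 := by
      by_contra hx
      have hn : (0 : ℝ) < ‖x‖ := norm_pos_iff.mpr hx
      have hmem : (‖x‖⁻¹ • x) ∈ Metric.sphere (0 : EuclideanSpace ℝ (Fin n)) 1 :=
        mem_sphere_zero_iff_norm.mpr
          (by rw [norm_smul, norm_inv, norm_norm, inv_mul_cancel₀ hn.ne'])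
      rw [hs] at hmem
      exact hmem
    subst hx
    simp [qf_zero]
  · obtain ⟨x₀, hx₀s, hmin⟩ := (isCompact_sphere (0 : EuclideanSpace ℝ (Fin n)) 1).exists_isMinOn
      hs (qf_continuous A).continuousOn
    have hx₀norm : ‖x₀‖ = 1 := mem_sphere_zero_iff_norm.mp hx₀s
    have hx₀ : x₀ ≠ 0 := by
      intro h
      rw [h, norm_zero] at hx₀norm
      exact one_ne_zero hx₀norm.symm
    refine ⟨qf A x₀, qf_pos hA hx₀, fun x => ?_⟩
    rcases eq_or_ne x 0 with rfl | hx
    · simp [qf_zero]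
    · have hn : (0 : ℝ) < ‖x‖ := norm_pos_iff.mpr hx
      have hu : (‖x‖⁻¹ • x) ∈ Metric.sphere (0 : EuclideanSpace ℝ (Fin n)) 1 :=
        mem_sphere_zero_iff_norm.mpr
          (by rw [norm_smul, norm_inv, norm_norm, inv_mul_cancel₀ hn.ne'])
      have h1 : qf A x₀ ≤ qf A (‖x‖⁻¹ • x) := hmin hu
      rw [qf_smul] at h1
      have h2 : qf A x₀ * ‖x‖ ^ 2 ≤ (‖x‖⁻¹ ^ 2 * qf A x) * ‖x‖ ^ 2 :=
        mul_le_mul_of_nonneg_right h1 (sq_nonneg _)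
      have h3 : (‖x‖⁻¹ ^ 2 * qf A x) * ‖x‖ ^ 2 = qf A x := by
        field_simp
      linarith

private lemma ec_gauss {n : ℕ} {b : ℝ} (hb : 0 < b) :
    Integrable fun x : EuclideanSpace ℝ (Fin n) => Real.exp (-(b * ‖x‖ ^ 2)) := by
  have h := GaussianFourier.integrable_cexp_neg_mul_sq_norm_add (V := EuclideanSpace ℝ (Fin n))
      (b := (b : ℂ)) (by simpa using hb) 0 0
  refine h.norm.congr (Filter.Eventually.of_forall fun v => ?_)
  show ‖Complex.exp _‖ = _
  rw [Complex.norm_exp]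
  congr 1
  simp [← Complex.ofReal_pow]

private lemma ec_int_qf {n : ℕ} (A : Matrix (Fin n) (Fin n) ℝ) (hA : A.PosDef) :
    Integrable fun x : EuclideanSpace ℝ (Fin n) => Real.exp (-(qf A x)) := by
  obtain ⟨ε, hε, hlb⟩ := qf_lower A hA
  refine (ec_gauss hε).mono ((Real.continuous_exp.comp (qf_continuous A).neg).aestronglyMeasurable)
    (Filter.Eventually.of_forall fun x => ?_)
  rw [Real.norm_eq_abs, Real.norm_eq_abs, abs_of_pos (Real.exp_pos _),
    abs_of_pos (Real.exp_pos _)]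
  exact Real.exp_le_exp.mpr (by linarith [hlb x])

/-- If `exp(−U)` is integrable on `ℝⁿ`, then `exp(−H)` is integrable for the elastically
coupled Hamiltonian, for any `α > 0` and symmetric positive definite `M`. -/
theorem ec_hamiltonian_integrable (n K : ℕ) (hK : 1 ≤ K)
    (U : EuclideanSpace ℝ (Fin n) → ℝ) (hUmeas : Measurable U)
    (hU : Integrable fun θ => Real.exp (-(U θ)))
    (α : ℝ) (hα : 0 < α) (M : Matrix (Fin n) (Fin n) ℝ) (hM : M.PosDef)
    (H : (Fin K → EuclideanSpace ℝ (Fin n)) × (Fin K → EuclideanSpace ℝ (Fin n)) ×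
      EuclideanSpace ℝ (Fin n) × EuclideanSpace ℝ (Fin n) → ℝ)
    (hH : ∀ z, H z =
      (∑ i, (U (z.1 i) + (z.2.1 i : Fin n → ℝ) ⬝ᵥ M⁻¹ *ᵥ (z.2.1 i : Fin n → ℝ))) +
      α / (2 * K) * ∑ i, ‖z.1 i - z.2.2.1‖ ^ 2 +
      (z.2.2.2 : Fin n → ℝ) ⬝ᵥ M⁻¹ *ᵥ (z.2.2.2 : Fin n → ℝ)) :
    Integrable fun z => Real.exp (-(H z)) := by
  classical
  haveI sfA : SigmaFinite (volume : Measure (EuclideanSpace ℝ (Fin n))) := inferInstance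
  haveI sfB : SigmaFinite (volume : Measure (Fin K → EuclideanSpace ℝ (Fin n))) := inferInstance
  haveI sf3 : SFinite ((volume : Measure (Fin K → EuclideanSpace ℝ (Fin n))).prod
      (volume : Measure (EuclideanSpace ℝ (Fin n)))) := Measure.prod.instSFinite
  haveI sf4 : SFinite ((volume : Measure (EuclideanSpace ℝ (Fin n))).prod
      (volume : Measure (Fin K → EuclideanSpace ℝ (Fin n)))) := Measure.prod.instSFinite
  haveI sf5 : SFinite (volume : Measure ((Fin K → EuclideanSpace ℝ (Fin n)) ×
      EuclideanSpace ℝ (Fin n))) := sf3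
  haveI sf6 : SigmaFinite ((volume : Measure (Fin K → EuclideanSpace ℝ (Fin n))).prod
      (volume : Measure (EuclideanSpace ℝ (Fin n)))) := Measure.prod.instSigmaFinite
  haveI sf7 : SigmaFinite (volume : Measure ((Fin K → EuclideanSpace ℝ (Fin n)) ×
      EuclideanSpace ℝ (Fin n))) := sf6
  have hA : (M⁻¹).PosDef := hM.inv
  have hKpos : (0 : ℝ) < (K : ℝ) := by exact_mod_cast hK
  have hβ : 0 < α / (2 * (K : ℝ)) := div_pos hα (mul_pos two_pos hKpos)
  set β : ℝ := α / (2 * (K : ℝ)) with hβdef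
  -- the pointwise identity
  have hqf : ∀ x : EuclideanSpace ℝ (Fin n),
      (x : Fin n → ℝ) ⬝ᵥ M⁻¹ *ᵥ (x : Fin n → ℝ) = qf M⁻¹ x := fun _ => rfl
  have hpt : ∀ z : (Fin K → (EuclideanSpace ℝ (Fin n))) × (Fin K → (EuclideanSpace ℝ (Fin n))) × (EuclideanSpace ℝ (Fin n)) × (EuclideanSpace ℝ (Fin n)),
      Real.exp (-(H z)) =
        Real.exp (-((∑ i, U (z.1 i)) + β * ∑ i, ‖z.1 i - z.2.2.1‖ ^ 2)) *
          (Real.exp (-(∑ i, qf M⁻¹ (z.2.1 i))) * Real.exp (-(qf M⁻¹ z.2.2.2))) := by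
    intro z
    rw [hH z, ← Real.exp_add, ← Real.exp_add]
    congr 1
    simp only [hqf]
    rw [Finset.sum_add_distrib]
    ring
  -- the momentum parts
  have hR : Integrable fun r : (EuclideanSpace ℝ (Fin n)) => Real.exp (-(qf M⁻¹ r)) := ec_int_qf M⁻¹ hA
  have hG : Integrable fun p : Fin K → (EuclideanSpace ℝ (Fin n)) => Real.exp (-(∑ i, qf M⁻¹ (p i))) := by
    have h := Integrable.fintype_prod (f := fun _ : Fin K => fun x : (EuclideanSpace ℝ (Fin n)) =>
      Real.exp (-(qf M⁻¹ x))) fun _ => ec_int_qf M⁻¹ hA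
    refine h.congr (Filter.Eventually.of_forall fun p => ?_)
    show (∏ i, Real.exp (-(qf M⁻¹ (p i)))) = Real.exp (-(∑ i, qf M⁻¹ (p i)))
    rw [← Real.exp_sum]
    congr 1
    exact Finset.sum_neg_distrib _
  -- the position part
  set i0 : Fin K := ⟨0, hK⟩ with hi0
  have hTmeas : Measurable fun w : (Fin K → (EuclideanSpace ℝ (Fin n))) × (EuclideanSpace ℝ (Fin n)) => w.1 i0 - w.2 :=
    ((measurable_pi_apply i0).comp measurable_fst).sub measurable_snd
  let T : ((Fin K → (EuclideanSpace ℝ (Fin n))) × (EuclideanSpace ℝ (Fin n))) ≃ᵐ ((Fin K → (EuclideanSpace ℝ (Fin n))) × (EuclideanSpace ℝ (Fin n))) :=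
    { toFun := fun w => (w.1, w.1 i0 - w.2)
      invFun := fun w => (w.1, w.1 i0 - w.2)
      left_inv := fun w => by simp
      right_inv := fun w => by simp
      measurable_toFun := measurable_fst.prodMk hTmeas
      measurable_invFun := measurable_fst.prodMk hTmeas }
  have hT : MeasurePreserving (⇑T) (volume : Measure ((Fin K → (EuclideanSpace ℝ (Fin n))) × (EuclideanSpace ℝ (Fin n)))) volume := by
    exact (MeasurePreserving.id (volume : Measure (Fin K → (EuclideanSpace ℝ (Fin n))))).skew_product
      (g := fun (θ : Fin K → (EuclideanSpace ℝ (Fin n))) (c : (EuclideanSpace ℝ (Fin n))) => θ i0 - c) hTmeas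
      (Filter.Eventually.of_forall fun θ =>
        (Measure.measurePreserving_sub_left (volume : Measure (EuclideanSpace ℝ (Fin n))) (θ i0)).map_eq)
  have hbase : Integrable fun w : (Fin K → (EuclideanSpace ℝ (Fin n))) × (EuclideanSpace ℝ (Fin n)) =>
      (∏ i, Real.exp (-(U (w.1 i)))) * Real.exp (-(β * ‖w.2‖ ^ 2)) :=
    (Integrable.fintype_prod (f := fun _ : Fin K => fun θ : (EuclideanSpace ℝ (Fin n)) => Real.exp (-(U θ)))
      fun _ => hU).mul_prod (ec_gauss hβ)
  have hFtilde : Integrable fun w : (Fin K → (EuclideanSpace ℝ (Fin n))) × (EuclideanSpace ℝ (Fin n)) =>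
      (∏ i, Real.exp (-(U (w.1 i)))) * Real.exp (-(β * ‖w.1 i0 - w.2‖ ^ 2)) :=
    (hT.integrable_comp_emb T.measurableEmbedding).mpr hbase
  have hF : Integrable fun w : (Fin K → (EuclideanSpace ℝ (Fin n))) × (EuclideanSpace ℝ (Fin n)) =>
      Real.exp (-((∑ i, U (w.1 i)) + β * ∑ i, ‖w.1 i - w.2‖ ^ 2)) := by
    have hm1 : Measurable fun w : (Fin K → (EuclideanSpace ℝ (Fin n))) × (EuclideanSpace ℝ (Fin n)) => ∑ i, U (w.1 i) :=
      Finset.measurable_sum _ fun i _ => hUmeas.comp ((measurable_pi_apply i).comp measurable_fst)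
    have hm2 : Measurable fun w : (Fin K → (EuclideanSpace ℝ (Fin n))) × (EuclideanSpace ℝ (Fin n)) => β * ∑ i, ‖w.1 i - w.2‖ ^ 2 :=
      measurable_const.mul (Finset.measurable_sum _ fun i _ =>
        ((((continuous_apply i).comp continuous_fst).sub continuous_snd).norm.pow 2).measurable)
    refine hFtilde.mono (Real.measurable_exp.comp (hm1.add hm2).neg).aestronglyMeasurable
      (Filter.Eventually.of_forall fun w => ?_)
    have h1 : ∏ i, Real.exp (-(U (w.1 i))) = Real.exp (-(∑ i, U (w.1 i))) := by
      rw [← Real.exp_sum]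
      congr 1
      exact Finset.sum_neg_distrib _
    rw [Real.norm_eq_abs, abs_of_pos (Real.exp_pos _), Real.norm_eq_abs,
      abs_of_pos (by positivity), h1, ← Real.exp_add]
    apply Real.exp_le_exp.mpr
    have hsingle : ‖w.1 i0 - w.2‖ ^ 2 ≤ ∑ i, ‖w.1 i - w.2‖ ^ 2 :=
      Finset.single_le_sum (f := fun i => ‖w.1 i - w.2‖ ^ 2) (fun i _ => sq_nonneg _)
        (Finset.mem_univ i0)
    have := mul_le_mul_of_nonneg_left hsingle hβ.le
    linarith
  -- combine
  have hGR : Integrable fun v : (Fin K → (EuclideanSpace ℝ (Fin n))) × (EuclideanSpace ℝ (Fin n)) =>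
      Real.exp (-(∑ i, qf M⁻¹ (v.1 i))) * Real.exp (-(qf M⁻¹ v.2)) := hG.mul_prod hR
  have hbig : Integrable fun w : ((Fin K → (EuclideanSpace ℝ (Fin n))) × (EuclideanSpace ℝ (Fin n))) × ((Fin K → (EuclideanSpace ℝ (Fin n))) × (EuclideanSpace ℝ (Fin n))) =>
      Real.exp (-((∑ i, U (w.1.1 i)) + β * ∑ i, ‖w.1.1 i - w.1.2‖ ^ 2)) *
        (Real.exp (-(∑ i, qf M⁻¹ (w.2.1 i))) * Real.exp (-(qf M⁻¹ w.2.2))) :=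
    hF.mul_prod hGR
  -- rearranging measurable equivalence
  let e₂ : ((EuclideanSpace ℝ (Fin n)) × ((Fin K → (EuclideanSpace ℝ (Fin n))) × (EuclideanSpace ℝ (Fin n)))) ≃ᵐ ((Fin K → (EuclideanSpace ℝ (Fin n))) × ((EuclideanSpace ℝ (Fin n)) × (EuclideanSpace ℝ (Fin n)))) :=
    MeasurableEquiv.prodAssoc.symm.trans
      ((MeasurableEquiv.prodComm.prodCongr (MeasurableEquiv.refl (EuclideanSpace ℝ (Fin n)))).trans
        MeasurableEquiv.prodAssoc)
  let e : (((Fin K → (EuclideanSpace ℝ (Fin n))) × (EuclideanSpace ℝ (Fin n))) × ((Fin K → (EuclideanSpace ℝ (Fin n))) × (EuclideanSpace ℝ (Fin n)))) ≃ᵐ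
      ((Fin K → (EuclideanSpace ℝ (Fin n))) × ((Fin K → (EuclideanSpace ℝ (Fin n))) × ((EuclideanSpace ℝ (Fin n)) × (EuclideanSpace ℝ (Fin n))))) :=
    MeasurableEquiv.prodAssoc.trans ((MeasurableEquiv.refl (Fin K → (EuclideanSpace ℝ (Fin n)))).prodCongr e₂)
  have he₂ : MeasurePreserving (⇑e₂) (volume : Measure ((EuclideanSpace ℝ (Fin n)) × ((Fin K → (EuclideanSpace ℝ (Fin n))) × (EuclideanSpace ℝ (Fin n)))))
      (volume : Measure ((Fin K → (EuclideanSpace ℝ (Fin n))) × ((EuclideanSpace ℝ (Fin n)) × (EuclideanSpace ℝ (Fin n))))) := by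
    have h1 : MeasurePreserving (⇑(MeasurableEquiv.prodAssoc
          (α := (EuclideanSpace ℝ (Fin n))) (β := Fin K → (EuclideanSpace ℝ (Fin n))) (γ := (EuclideanSpace ℝ (Fin n)))).symm)
        ((volume : Measure (EuclideanSpace ℝ (Fin n))).prod ((volume : Measure (Fin K → (EuclideanSpace ℝ (Fin n)))).prod (volume : Measure (EuclideanSpace ℝ (Fin n)))))
        (((volume : Measure (EuclideanSpace ℝ (Fin n))).prod (volume : Measure (Fin K → (EuclideanSpace ℝ (Fin n))))).prod (volume : Measure (EuclideanSpace ℝ (Fin n)))) :=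
      (measurePreserving_prodAssoc _ _ _).symm MeasurableEquiv.prodAssoc
    have h2 : MeasurePreserving (Prod.map (Prod.swap : (EuclideanSpace ℝ (Fin n)) × (Fin K → (EuclideanSpace ℝ (Fin n))) → (Fin K → (EuclideanSpace ℝ (Fin n))) × (EuclideanSpace ℝ (Fin n)))
          (id : (EuclideanSpace ℝ (Fin n)) → (EuclideanSpace ℝ (Fin n))))
        (((volume : Measure (EuclideanSpace ℝ (Fin n))).prod (volume : Measure (Fin K → (EuclideanSpace ℝ (Fin n))))).prod (volume : Measure (EuclideanSpace ℝ (Fin n))))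
        (((volume : Measure (Fin K → (EuclideanSpace ℝ (Fin n)))).prod (volume : Measure (EuclideanSpace ℝ (Fin n)))).prod (volume : Measure (EuclideanSpace ℝ (Fin n)))) :=
      Measure.measurePreserving_swap.prod (MeasurePreserving.id _)
    have h3 := measurePreserving_prodAssoc (volume : Measure (Fin K → (EuclideanSpace ℝ (Fin n))))
      (volume : Measure (EuclideanSpace ℝ (Fin n))) (volume : Measure (EuclideanSpace ℝ (Fin n)))
    exact h3.comp (h2.comp h1)
  have he : MeasurePreserving (⇑e)
      (volume : Measure (((Fin K → (EuclideanSpace ℝ (Fin n))) × (EuclideanSpace ℝ (Fin n))) × ((Fin K → (EuclideanSpace ℝ (Fin n))) × (EuclideanSpace ℝ (Fin n)))))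
      (volume : Measure ((Fin K → (EuclideanSpace ℝ (Fin n))) × ((Fin K → (EuclideanSpace ℝ (Fin n))) × ((EuclideanSpace ℝ (Fin n)) × (EuclideanSpace ℝ (Fin n)))))) := by
    have h1 := measurePreserving_prodAssoc (volume : Measure (Fin K → (EuclideanSpace ℝ (Fin n))))
      (volume : Measure (EuclideanSpace ℝ (Fin n))) ((volume : Measure (Fin K → (EuclideanSpace ℝ (Fin n)))).prod (volume : Measure (EuclideanSpace ℝ (Fin n))))
    exact ((MeasurePreserving.id (volume : Measure (Fin K → (EuclideanSpace ℝ (Fin n))))).prod he₂).comp h1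
  refine (he.integrable_comp_emb e.measurableEmbedding).mp
    (hbig.congr (Filter.Eventually.of_forall fun w => ?_))
  show _ = Real.exp (-(H (e w)))
  rw [hpt (e w)]
  rfl
end
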